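/- For integers n, k, t ≥ 0 with 2t ≤ n and k + t > n, one has a(n,k,t) = Σ_{i=0}^{t} (−1)^i · C(t,i) · C(n−2i, k−2i) = 0. -/

import Mathlib

/-!
By symmetry `C(n-2i, k-2i) = C(n-2i, n-k)`. For `k > n` every term vanishes. For `k ≤ n` the
function `i ↦ C(n-2i, n-k)` is a polynomial in `i` of degree `n-k < t` on `0 ≤ i ≤ t`, and
`a(n,k,t)` is, up to sign, its `t`-th forward difference at `0`, which therefore vanishes.
-/

/-- Integer binomial coefficient: `intChoose a b` is zero unless `0 ≤ b ≤ a`. -/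
def intChoose (a b : ℤ) : ℤ :=
  if 0 ≤ b ∧ b ≤ a then (a.toNat.choose b.toNat : ℤ) else 0

/-- `a(n,k,t) = ∑_{i=0}^t (-1)^i C(t,i) C(n-2i, k-2i)`. -/
def aFun (n k t : ℕ) : ℤ :=
  ∑ i ∈ Finset.range (t + 1),
    (-1) ^ i * intChoose t i * intChoose ((n : ℤ) - 2 * i) ((k : ℤ) - 2 * i)

open Finset Polynomial

theorem intChoose_natCast (a b : ℕ) : intChoose a b = a.choose b := by
  unfold intChoose
  split_ifs with h
  · simp
  · rw [Nat.choose_eq_zero_of_lt (by omega), Nat.cast_zero]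

theorem intChoose_of_neg {a b : ℤ} (hb : b < 0) : intChoose a b = 0 :=
  if_neg fun h => hb.not_ge h.1

theorem intChoose_symm (a b : ℤ) : intChoose a b = intChoose a (a - b) := by
  unfold intChoose
  by_cases h : 0 ≤ b ∧ b ≤ a
  · rw [if_pos h, if_pos (by omega), ← Nat.choose_symm (by omega)]
    congr 2
    omega
  · rw [if_neg h, if_neg (by omega)]

theorem neg_one_pow_mul_neg_one_pow_sub {R : Type*} [Monoid R] [HasDistribNeg R] {k t : ℕ}
    (h : k ≤ t) : (-1 : R) ^ t * (-1) ^ (t - k) = (-1) ^ k := by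
  rw [← pow_add, show t + (t - k) = k + 2 * (t - k) by omega, pow_add, pow_mul]
  simp

theorem Polynomial.alternating_sum_choose_mul_eval_eq_zero {R : Type*} [CommRing R] {P : R[X]}
    {t : ℕ} (hP : P.natDegree < t) :
    ∑ i ∈ range (t + 1), (-1) ^ i * t.choose i * P.eval (i : R) = 0 := by
  have hdiff := congr_fun (fwdDiff_iter_eq_zero_of_degree_lt hP) 0
  rw [fwdDiff_iter_eq_sum_shift] at hdiff
  calc _ = (-1) ^ t * ∑ i ∈ range (t + 1),
          ((-1 : ℤ) ^ (t - i) * t.choose i) • P.eval (0 + i • 1) := by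
        rw [mul_sum]
        refine sum_congr rfl fun i hi => ?_
        rw [zsmul_eq_mul, ← mul_assoc]
        push_cast
        rw [← mul_assoc, neg_one_pow_mul_neg_one_pow_sub (Nat.le_of_lt_succ (mem_range.mp hi))]
        simp
    _ = 0 := by rw [hdiff, Pi.zero_apply, mul_zero]

theorem alternating_sum_choose_mul_choose_sub_mul_eq_zero {t m a c : ℕ} (hm : m < t)
    (hc : a * t ≤ c) :
    ∑ i ∈ range (t + 1), (-1 : ℤ) ^ i * t.choose i * (c - a * i).choose m = 0 := by
  -- `m! * C(c - a i, m)` is the falling factorial `(c - a i)ₘ`, a polynomial of degree `m` in `i`.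
  set P : ℤ[X] := (descPochhammer ℤ m).comp (C (c : ℤ) - C (a : ℤ) * X)
  have hdeg : P.natDegree < t := by
    refine (natDegree_comp_le.trans ?_).trans_lt hm
    rw [descPochhammer_natDegree]
    exact mul_le_of_le_one_right (Nat.zero_le _) (by compute_degree)
  have heval : ∀ i ∈ range (t + 1), P.eval (i : ℤ) = m.factorial * (c - a * i).choose m := by
    intro i hi
    have hai : a * i ≤ c := (Nat.mul_le_mul_left a (Nat.le_of_lt_succ (mem_range.mp hi))).trans hc
    have hlin : (C (c : ℤ) - C (a : ℤ) * X).eval (i : ℤ) = ((c - a * i : ℕ) : ℤ) := by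
      simp [Nat.cast_sub hai]
    rw [eval_comp, hlin, descPochhammer_eval_eq_descFactorial,
      Nat.descFactorial_eq_factorial_mul_choose, Nat.cast_mul]
  have h := alternating_sum_choose_mul_eval_eq_zero hdeg
  rw [sum_congr rfl fun i hi => by rw [heval i hi, mul_left_comm], ← mul_sum] at h
  exact (mul_eq_zero.mp h).resolve_left (Nat.cast_ne_zero.mpr m.factorial_ne_zero)

theorem stmt_9 (n k t : ℕ) (h2t : 2 * t ≤ n) (hkt : n < k + t) :
    aFun n k t = 0 := by
  have hsymm (i : ℕ) :
      intChoose ((n : ℤ) - 2 * i) ((k : ℤ) - 2 * i) = intChoose (n - 2 * i) (n - k) := by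
    rw [intChoose_symm]
    ring_nf
  unfold aFun
  simp_rw [hsymm, intChoose_natCast]
  rcases le_or_gt k n with hkn | hnk
  · rw [← alternating_sum_choose_mul_choose_sub_mul_eq_zero (m := n - k) (by omega) h2t]
    refine sum_congr rfl fun i hi => ?_
    have : 2 * i ≤ n := by have := mem_range.mp hi; omega
    rw [show (n : ℤ) - 2 * i = (n - 2 * i : ℕ) by omega, ← Nat.cast_sub hkn, intChoose_natCast]
  · exact sum_eq_zero fun i _ => by rw [intChoose_of_neg (by omega), mul_zero]
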